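/- arXiv:1012.5038 — 4 statements merged into one kernel-verified Lean document; each statement's English description precedes it below -/
import Mathlib

section
/- The ring of 2×2 matrices over the field F₂ = ℤ/2ℤ has a presentation as the quotient of the free (noncommutative) F₂-algebra on two generators a, b by the two-sided ideal generated by the relations a² = 0, b² = 0, and ab + ba = 1. -/
/-- Relations presenting `Mat₂(𝔽₂)` on generators `a = ι 0`, `b = ι 1`. -/
inductive PresRel :
    FreeAlgebra (ZMod 2) (Fin 2) → FreeAlgebra (ZMod 2) (Fin 2) → Prop
  | asq : PresRel (FreeAlgebra.ι (ZMod 2) 0 * FreeAlgebra.ι (ZMod 2) 0) 0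
  | bsq : PresRel (FreeAlgebra.ι (ZMod 2) 1 * FreeAlgebra.ι (ZMod 2) 1) 0
  | anticomm : PresRel
      (FreeAlgebra.ι (ZMod 2) 0 * FreeAlgebra.ι (ZMod 2) 1 +
        FreeAlgebra.ι (ZMod 2) 1 * FreeAlgebra.ι (ZMod 2) 0) 1

section Aux

variable {R : Type*} [Ring R] {x y : R}
  (hx : x * x = 0) (hy : y * y = 0) (hxy : x * y + y * x = 1)

namespace Mat2Pres

include hxy in
lemma hba : y * x = 1 - x * y := by
  rw [← hxy]; abel

include hx hy hxy in
lemma p1 : (x * y) * (x * y) = x * y := by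
  have h : (x * y) * (x * y) = x * (y * x) * y := by noncomm_ring
  rw [h, hba hxy]
  have : x * (1 - x * y) * y = x * y - (x * x) * (y * y) := by noncomm_ring
  rw [this, hx, hy]; noncomm_ring

include hx hxy in
lemma p2 : (x * y) * x = x := by
  have h : (x * y) * x = x * (y * x) := by noncomm_ring
  rw [h, hba hxy]
  have : x * (1 - x * y) = x - (x * x) * y := by noncomm_ring
  rw [this, hx]; noncomm_ring

include hx hxy in
lemma p3 : x * (y * x) = x := by
  have h : x * (y * x) = (x * y) * x := by noncomm_ring
  rw [h, p2 hx hxy]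

include hy hxy in
lemma p4 : y * (x * y) = y := by
  have h : y * (x * y) = (y * x) * y := by noncomm_ring
  rw [h, hba hxy]
  have : (1 - x * y) * y = y - x * (y * y) := by noncomm_ring
  rw [this, hy]; noncomm_ring

include hy hxy in
lemma p5 : (y * x) * y = y := by
  have h : (y * x) * y = y * (x * y) := by noncomm_ring
  rw [h, p4 hy hxy]

include hx hy hxy in
lemma p6 : (y * x) * (y * x) = y * x := by
  have h : (y * x) * (y * x) = y * ((x * y) * x) := by noncomm_ring
  rw [h, p2 hx hxy]

include hx in
lemma q1 : x * (x * y) = 0 := by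
  have h : x * (x * y) = (x * x) * y := by noncomm_ring
  rw [h, hx, zero_mul]

include hy in
lemma q2 : (x * y) * y = 0 := by
  have h : (x * y) * y = x * (y * y) := by noncomm_ring
  rw [h, hy, mul_zero]

include hy in
lemma q3 : y * (y * x) = 0 := by
  have h : y * (y * x) = (y * y) * x := by noncomm_ring
  rw [h, hy, zero_mul]

include hx in
lemma q4 : (y * x) * x = 0 := by
  have h : (y * x) * x = y * (x * x) := by noncomm_ring
  rw [h, hx, mul_zero]

include hy in
lemma q5 : (x * y) * (y * x) = 0 := by
  have h : (x * y) * (y * x) = x * (y * y) * x := by noncomm_ring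
  rw [h, hy]; noncomm_ring

include hx in
lemma q6 : (y * x) * (x * y) = 0 := by
  have h : (y * x) * (x * y) = y * (x * x) * y := by noncomm_ring
  rw [h, hx]; noncomm_ring

end Mat2Pres

end Aux

namespace Mat2Pres

open FreeAlgebra

noncomputable section

abbrev F2 := ZMod 2
abbrev Q := RingQuot PresRel
abbrev M2 := Matrix (Fin 2) (Fin 2) F2

/-- Image of the generator `a` in the quotient. -/
def A : Q := RingQuot.mkAlgHom F2 PresRel (ι F2 0)
/-- Image of the generator `b` in the quotient. -/
def B : Q := RingQuot.mkAlgHom F2 PresRel (ι F2 1)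

lemma hA : A * A = 0 := by
  have := RingQuot.mkAlgHom_rel F2 PresRel.asq
  simpa [A, map_mul, map_zero] using this

lemma hB : B * B = 0 := by
  have := RingQuot.mkAlgHom_rel F2 PresRel.bsq
  simpa [B, map_mul, map_zero] using this

lemma hAB : A * B + B * A = 1 := by
  have := RingQuot.mkAlgHom_rel F2 PresRel.anticomm
  simpa [A, B, map_mul, map_add, map_one] using this

/-- The matrix image of `a`. -/
def MA : M2 := !![0, 1; 0, 0]
/-- The matrix image of `b`. -/
def MB : M2 := !![0, 0; 1, 0]

/-- The algebra map from the free algebra to matrices. -/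
def f0 : FreeAlgebra F2 (Fin 2) →ₐ[F2] M2 := FreeAlgebra.lift F2 ![MA, MB]

lemma f0_rel : ∀ ⦃x y⦄, PresRel x y → f0 x = f0 y := by
  rintro _ _ (h | h | h) <;>
    simp only [f0, map_mul, map_add, map_zero, map_one, FreeAlgebra.lift_ι_apply,
      Matrix.cons_val_zero, Matrix.cons_val_one, Matrix.head_cons] <;>
    · show _ = _
      simp only [MA, MB]
      decide

/-- The forward map `Q → M2`. -/
def φ : Q →ₐ[F2] M2 := RingQuot.liftAlgHom F2 ⟨f0, f0_rel⟩

lemma φ_A : φ A = MA := by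
  simp [φ, A, RingQuot.liftAlgHom_mkAlgHom_apply, f0, FreeAlgebra.lift_ι_apply]

lemma φ_B : φ B = MB := by
  simp [φ, B, RingQuot.liftAlgHom_mkAlgHom_apply, f0, FreeAlgebra.lift_ι_apply]

/-- The backward map as a linear map. -/
def ψ₀ : M2 →ₗ[F2] Q where
  toFun M := M 0 0 • (A * B) + M 0 1 • A + M 1 0 • B + M 1 1 • (B * A)
  map_add' M N := by
    simp only [Matrix.add_apply, add_smul]
    module
  map_smul' c M := by
    simp only [Matrix.smul_apply, smul_eq_mul, mul_smul, RingHom.id_apply]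
    module

lemma ψ₀_apply (M : M2) :
    ψ₀ M = M 0 0 • (A * B) + M 0 1 • A + M 1 0 • B + M 1 1 • (B * A) := rfl

/-- The backward map as an algebra hom. -/
def ψ : M2 →ₐ[F2] Q :=
  AlgHom.ofLinearMap ψ₀
    (by
      rw [ψ₀_apply]
      norm_num [Matrix.one_apply]
      exact hAB)
    (by
      intro M N
      simp only [ψ₀_apply, Matrix.mul_apply, Fin.sum_univ_two]
      rw [show (M 0 0 • (A * B) + M 0 1 • A + M 1 0 • B + M 1 1 • (B * A)) *
            (N 0 0 • (A * B) + N 0 1 • A + N 1 0 • B + N 1 1 • (B * A)) =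
          (M 0 0 * N 0 0) • ((A*B)*(A*B)) + (M 0 0 * N 0 1) • ((A*B)*A)
          + (M 0 0 * N 1 0) • ((A*B)*B) + (M 0 0 * N 1 1) • ((A*B)*(B*A))
          + (M 0 1 * N 0 0) • (A*(A*B)) + (M 0 1 * N 0 1) • (A*A)
          + (M 0 1 * N 1 0) • (A*B) + (M 0 1 * N 1 1) • (A*(B*A))
          + (M 1 0 * N 0 0) • (B*(A*B)) + (M 1 0 * N 0 1) • (B*A)
          + (M 1 0 * N 1 0) • (B*B) + (M 1 0 * N 1 1) • (B*(B*A))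
          + (M 1 1 * N 0 0) • ((B*A)*(A*B)) + (M 1 1 * N 0 1) • ((B*A)*A)
          + (M 1 1 * N 1 0) • ((B*A)*B) + (M 1 1 * N 1 1) • ((B*A)*(B*A)) by
            simp only [add_mul, mul_add, smul_mul_smul_comm]
            module]
      rw [p1 hA hB hAB, p2 hA hAB, p3 hA hAB, p4 hB hAB, p5 hB hAB, p6 hA hB hAB,
        q1 hA, q2 hB, q3 hB, q4 hA, q5 hB, q6 hA, hA, hB]
      module)

lemma ψ_apply (M : M2) :
    ψ M = M 0 0 • (A * B) + M 0 1 • A + M 1 0 • B + M 1 1 • (B * A) := rfl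

lemma φψ : φ.comp ψ = AlgHom.id F2 M2 := by
  apply AlgHom.ext
  intro M
  simp only [AlgHom.coe_comp, Function.comp_apply, AlgHom.coe_id, id_eq, ψ_apply,
    map_add, map_smul, map_mul, φ_A, φ_B]
  ext i j
  fin_cases i <;> fin_cases j <;>
    simp [MA, MB, Matrix.mul_apply, Fin.sum_univ_two, Matrix.smul_apply, Matrix.add_apply]

lemma ψφA : ψ (φ A) = A := by
  rw [φ_A, ψ_apply]
  simp [MA]

lemma ψφB : ψ (φ B) = B := by
  rw [φ_B, ψ_apply]
  simp [MB]

lemma ψφ : ψ.comp φ = AlgHom.id F2 Q := by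
  apply RingQuot.ringQuot_ext'
  apply FreeAlgebra.hom_ext
  funext i
  fin_cases i
  · exact ψφA
  · exact ψφB

end

end Mat2Pres

/-- `Mat₂(𝔽₂)` is presented by ⟨a, b | a² = 0, b² = 0, ab + ba = 1⟩ over 𝔽₂. -/
theorem mat2_presentation :
    Nonempty (RingQuot PresRel ≃ₐ[ZMod 2] Matrix (Fin 2) (Fin 2) (ZMod 2)) := by
  exact ⟨AlgEquiv.ofAlgHom Mat2Pres.φ Mat2Pres.ψ Mat2Pres.φψ Mat2Pres.ψφ⟩
end

section
/- There exist F₂-linear endomorphisms A, B, C of a countable-dimensional F₂-vector space H satisfying (1+AB)C = 1, (1+BA)C = 0, (1+BA)AC = 1, and 1 + C(1+AB) + AC(1+BA) = 0, where 1 denotes the identity endomorphism. -/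
/-!
Take the basis `eₙ = single n 1`, the shift `A eₙ = eₙ₊₁` and the doubling `C eₙ = e₂ₙ`, so that
`C` and `AC` map `H` isomorphically onto the spans of the even and of the odd basis vectors.
The map `B eₙ₊₁ = eₙ + [n odd] e_{n/2}`, `B e₀ = 0`, is chosen so that `1 + AB` and `1 + BA` are
the two halving maps: `1 + AB` sends `e₂ₘ ↦ eₘ` and kills odd vectors, `1 + BA` sends
`e₂ₘ₊₁ ↦ eₘ` and kills even vectors. The four relations then say that `(C, AC) : H ⊕ H → H` and
`(1 + AB, 1 + BA) : H → H ⊕ H` are mutually inverse (in characteristic 2, `1 + 1 = 0`).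
-/

open Finsupp

namespace EvenOddSplitting

noncomputable def shift : Module.End (ZMod 2) (ℕ →₀ ZMod 2) :=
  lmapDomain (ZMod 2) (ZMod 2) (· + 1)

noncomputable def double : Module.End (ZMod 2) (ℕ →₀ ZMod 2) :=
  lmapDomain (ZMod 2) (ZMod 2) (2 * ·)

noncomputable def descendImage : ℕ → ℕ →₀ ZMod 2
  | 0 => 0
  | n + 1 => single n 1 + if Odd n then single (n / 2) 1 else 0

noncomputable def descend : Module.End (ZMod 2) (ℕ →₀ ZMod 2) :=
  linearCombination (ZMod 2) descendImage

@[simp] lemma shift_single (n : ℕ) : shift (single n 1) = single (n + 1) 1 := by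
  simp [shift]

@[simp] lemma double_single (n : ℕ) : double (single n 1) = single (2 * n) 1 := by
  simp [double]

@[simp] lemma descend_single_zero : descend (single 0 1) = 0 := by
  simp [descend, descendImage]

@[simp] lemma descend_single_two_mul_add_one (m : ℕ) :
    descend (single (2 * m + 1) 1) = single (2 * m) 1 := by
  simp [descend, descendImage]

@[simp] lemma descend_single_two_mul_add_two (m : ℕ) :
    descend (single (2 * m + 2) 1) = single (2 * m + 1) 1 + single m 1 := by
  simp [descend, descendImage, show (2 * m + 1) / 2 = m by omega]

lemma one_add_shift_mul_descend_single_even (m : ℕ) :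
    (1 + shift * descend) (single (2 * m) 1) = single m 1 := by
  rcases m with _ | m
  · simp
  · simp [mul_add, ← add_assoc, ZModModule.add_self]

lemma one_add_shift_mul_descend_single_odd (m : ℕ) :
    (1 + shift * descend) (single (2 * m + 1) 1) = 0 := by
  simp [ZModModule.add_self]

lemma one_add_descend_mul_shift_single_even (m : ℕ) :
    (1 + descend * shift) (single (2 * m) 1) = 0 := by
  simp [ZModModule.add_self]

lemma one_add_descend_mul_shift_single_odd (m : ℕ) :
    (1 + descend * shift) (single (2 * m + 1) 1) = single m 1 := by
  simp [← add_assoc, ZModModule.add_self]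

lemma one_add_shift_mul_descend_mul_double : (1 + shift * descend) * double = 1 :=
  Finsupp.basisSingleOne.ext fun n => by
    simp only [Module.End.mul_apply, coe_basisSingleOne, double_single,
      one_add_shift_mul_descend_single_even, Module.End.one_apply]

lemma one_add_descend_mul_shift_mul_double : (1 + descend * shift) * double = 0 :=
  Finsupp.basisSingleOne.ext fun n => by
    simp only [Module.End.mul_apply, coe_basisSingleOne, double_single,
      one_add_descend_mul_shift_single_even, LinearMap.zero_apply]

lemma one_add_descend_mul_shift_mul_shift_mul_double :
    (1 + descend * shift) * (shift * double) = 1 :=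
  Finsupp.basisSingleOne.ext fun n => by
    simp only [Module.End.mul_apply, coe_basisSingleOne, double_single, shift_single,
      one_add_descend_mul_shift_single_odd, Module.End.one_apply]

lemma double_mul_one_add_shift_mul_descend_add_shift_mul_double_mul_one_add_descend_mul_shift :
    double * (1 + shift * descend) + shift * double * (1 + descend * shift) = 1 := by
  refine Finsupp.basisSingleOne.ext fun n => ?_
  obtain ⟨m, rfl | rfl⟩ := Nat.even_or_odd' n
  · simp only [coe_basisSingleOne]
    rw [LinearMap.add_apply, Module.End.mul_apply, Module.End.mul_apply,
      Module.End.mul_apply, one_add_shift_mul_descend_single_even,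
      one_add_descend_mul_shift_single_even, double_single, map_zero, map_zero, add_zero,
      Module.End.one_apply]
  · simp only [coe_basisSingleOne]
    rw [LinearMap.add_apply, Module.End.mul_apply, Module.End.mul_apply,
      Module.End.mul_apply, one_add_shift_mul_descend_single_odd,
      one_add_descend_mul_shift_single_odd, double_single, shift_single, map_zero, zero_add,
      Module.End.one_apply]

end EvenOddSplitting

/-- There exist 𝔽₂-linear endomorphisms `A, B, C` of a countable-dimensional
𝔽₂-vector space satisfying the relations of the algebra `R`: `(1+AB)C = 1`,
`(1+BA)C = 0`, `(1+BA)AC = 1`, and `1 + C(1+AB) + AC(1+BA) = 0`. -/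
theorem exists_representation :
    ∃ A B C : Module.End (ZMod 2) (ℕ →₀ ZMod 2),
      (1 + A * B) * C = 1 ∧
      (1 + B * A) * C = 0 ∧
      (1 + B * A) * (A * C) = 1 ∧
      1 + C * (1 + A * B) + A * C * (1 + B * A) = 0 := by
  open EvenOddSplitting in
  refine ⟨shift, descend, double, one_add_shift_mul_descend_mul_double,
    one_add_descend_mul_shift_mul_double, one_add_descend_mul_shift_mul_shift_mul_double, ?_⟩
  open EvenOddSplitting in
  rw [add_assoc,
    double_mul_one_add_shift_mul_descend_add_shift_mul_double_mul_one_add_descend_mul_shift]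
  exact ZModModule.add_self (1 : Module.End (ZMod 2) (ℕ →₀ ZMod 2))
end

section
/- The algebra R = F₂⟨a,b,c⟩/⟨1+c(1+ab)+ac(1+ba), (1+ba)c, (1+ab)c − 1, (1+ba)ac − 1⟩ admits no finite-dimensional representation: there is no unital F₂-algebra homomorphism R → Matₙ(F₂) for any n ≥ 1. -/
section
local notation "a" => FreeAlgebra.ι (ZMod 2) (0 : Fin 3)
local notation "b" => FreeAlgebra.ι (ZMod 2) (1 : Fin 3)
local notation "c" => FreeAlgebra.ι (ZMod 2) (2 : Fin 3)

/-- The defining relations of the algebra `R` from the paper. -/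
inductive RRel : FreeAlgebra (ZMod 2) (Fin 3) → FreeAlgebra (ZMod 2) (Fin 3) → Prop
  | r1 : RRel (1 + c * (1 + a * b) + a * c * (1 + b * a)) 0
  | r2 : RRel ((1 + b * a) * c) 0
  | r3 : RRel ((1 + a * b) * c) 1
  | r4 : RRel ((1 + b * a) * (a * c)) 1
end

/-!
Once right inverses are two-sided, the relations `(1 + ab)c = 1` and `(1 + ba)(ac) = 1`
turn into `c(1 + ab) = 1` and `ac(1 + ba) = 1`, so the first relation reads `1 + 1 + 1 = 0`,
i.e. `1 = 0` in characteristic two. Matrix rings over a field are Dedekind-finite, so a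
representation of `R` can only land in the zero ring `Mat₀(𝔽₂)`.
-/

theorem three_eq_zero_of_relations {S : Type*} [Ring S] [IsDedekindFiniteMonoid S] {x y z : S}
    (h1 : 1 + z * (1 + x * y) + x * z * (1 + y * x) = 0)
    (h3 : (1 + x * y) * z = 1) (h4 : (1 + y * x) * (x * z) = 1) : (3 : S) = 0 := by
  rw [mul_eq_one_comm] at h3 h4
  rw [h3, h4] at h1
  rw [← h1]
  norm_num

theorem RRel.subsingleton_of_algHom {S : Type*} [Ring S] [Algebra (ZMod 2) S]
    [IsDedekindFiniteMonoid S] (φ : RingQuot RRel →ₐ[ZMod 2] S) : Subsingleton S := by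
  set ψ := φ.comp (RingQuot.mkAlgHom (ZMod 2) RRel)
  have hψ {x y} (h : RRel x y) : ψ x = ψ y := congrArg φ (RingQuot.mkAlgHom_rel _ h)
  have h1 := hψ .r1
  have h3 := hψ .r3
  have h4 := hψ .r4
  simp only [map_add, map_mul, map_one, map_zero] at h1 h3 h4
  have three_eq_zero : (3 : S) = 0 := three_eq_zero_of_relations h1 h3 h4
  have three_eq_one : (3 : S) = 1 := by
    rw [← map_ofNat (algebraMap (ZMod 2) S) 3, show (3 : ZMod 2) = 1 from rfl, map_one]
  exact subsingleton_of_zero_eq_one (three_eq_one ▸ three_eq_zero).symm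

/-- The algebra `R` admits no finite-dimensional representation: there is no
unital 𝔽₂-algebra homomorphism `R → Matₙ(𝔽₂)` for any `n ≥ 1`. -/
theorem R_no_finite_dimensional_rep :
    ∀ n : ℕ, 1 ≤ n →
      IsEmpty (RingQuot RRel →ₐ[ZMod 2] Matrix (Fin n) (Fin n) (ZMod 2)) := by
  intro n hn
  have : Nonempty (Fin n) := ⟨⟨0, hn⟩⟩
  exact ⟨fun φ => not_subsingleton _ (RRel.subsingleton_of_algHom φ)⟩
end

section
/- Let H be the F₂-vector space with basis {vᵢ}, f(vᵢ) = v_{2i}, g(vᵢ) = v_{2i+1}, p(v₀)=0, p(vᵢ)=v_{i−1} (i≥1), s(vᵢ)=v_{i+1}+v_{2(i+1)}. Define endomorphisms a and b of H ≅ im(f) ⊕ im(g) acting (on the right) so that on the f-summand a acts by p into the g-summand and on the g-summand a acts by the identity into the f-summand; on the f-summand b acts by g into the f-summand plus identity into the g-summand, and on the g-summand b acts by s into the f-summand. Then 1 + ab is an isomorphism of H onto im(f) and 1 + ba is an isomorphism of H onto im(g). -/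
noncomputable def v (i : ℕ) : ℕ →₀ ZMod 2 := Finsupp.single i 1

lemma v_add_self (k : ℕ) : v k + v k = 0 := by
  have h : v k + v k = ((1 + 1 : ZMod 2)) • v k := by rw [add_smul, one_smul]
  rw [h, show (1 + 1 : ZMod 2) = 0 from rfl, zero_smul]

lemma ext_of_v {F G : (ℕ →₀ ZMod 2) →ₗ[ZMod 2] (ℕ →₀ ZMod 2)}
    (h : ∀ i, F (v i) = G (v i)) : F = G := by
  apply Finsupp.lhom_ext
  intro i c
  have : Finsupp.single i c = c • v i := by
    simp [v, Finsupp.smul_single]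
  rw [this, map_smul, map_smul, h]

/-- With `H = im(f) ⊕ im(g)` and right-acting endomorphisms `a, b` defined by
`a∘f = g∘p`, `a∘g = f`, `b∘f = f∘g + g`, and `b∘g = f∘s` (so that, as left
maps, the right action of `ab` is `b∘a` and of `ba` is `a∘b`), the maps
`1 + ab` and `1 + ba` are isomorphisms of `H` onto `im(f)` and onto `im(g)`
respectively. -/
theorem one_add_ab_isomorphisms
    (f g p s a b : (ℕ →₀ ZMod 2) →ₗ[ZMod 2] (ℕ →₀ ZMod 2))
    (hf : ∀ i, f (v i) = v (2 * i))
    (hg : ∀ i, g (v i) = v (2 * i + 1))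
    (hp0 : p (v 0) = 0) (hp : ∀ i, p (v (i + 1)) = v i)
    (hs : ∀ i, s (v i) = v (i + 1) + v (2 * (i + 1)))
    (haf : a ∘ₗ f = g ∘ₗ p) (hag : a ∘ₗ g = f)
    (hbf : b ∘ₗ f = f ∘ₗ g + g) (hbg : b ∘ₗ g = f ∘ₗ s) :
    (Function.Injective ((LinearMap.id : (ℕ →₀ ZMod 2) →ₗ[ZMod 2] (ℕ →₀ ZMod 2)) + b ∘ₗ a) ∧
      LinearMap.range ((LinearMap.id : (ℕ →₀ ZMod 2) →ₗ[ZMod 2] (ℕ →₀ ZMod 2)) + b ∘ₗ a) = LinearMap.range f) ∧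
    (Function.Injective ((LinearMap.id : (ℕ →₀ ZMod 2) →ₗ[ZMod 2] (ℕ →₀ ZMod 2)) + a ∘ₗ b) ∧
      LinearMap.range ((LinearMap.id : (ℕ →₀ ZMod 2) →ₗ[ZMod 2] (ℕ →₀ ZMod 2)) + a ∘ₗ b) = LinearMap.range g) := by
  have haf' : ∀ x, a (f x) = g (p x) := fun x => LinearMap.congr_fun haf x
  have hag' : ∀ x, a (g x) = f x := fun x => LinearMap.congr_fun hag x
  have hbf' : ∀ x, b (f x) = f (g x) + g x := fun x => LinearMap.congr_fun hbf x
  have hbg' : ∀ x, b (g x) = f (s x) := fun x => LinearMap.congr_fun hbg x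
  -- a on basis
  have ha_even : ∀ i, a (v (2 * i)) = g (p (v i)) := fun i => by
    rw [← hf i, haf']
  have ha_odd : ∀ i, a (v (2 * i + 1)) = v (2 * i) := fun i => by
    rw [← hg i, hag', hf]
  -- b on basis
  have hb_even : ∀ i, b (v (2 * i)) = v (2 * (2 * i + 1)) + v (2 * i + 1) := fun i => by
    rw [← hf i, hbf', hg, hf]
  have hb_odd : ∀ i, b (v (2 * i + 1)) = v (2 * (i + 1)) + v (2 * (2 * (i + 1))) := fun i => by
    rw [← hg i, hbg', hs, map_add, hf, hf]
  -- 1 + ba = f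
  have key1 : (LinearMap.id : (ℕ →₀ ZMod 2) →ₗ[ZMod 2] (ℕ →₀ ZMod 2)) + b ∘ₗ a = f := by
    apply ext_of_v
    intro n
    rcases Nat.even_or_odd n with ⟨i, hi⟩ | ⟨i, hi⟩
    · subst hi
      rw [(by ring : i + i = 2 * i)]
      simp only [LinearMap.add_apply, LinearMap.id_apply, LinearMap.comp_apply, ha_even, hf]
      cases i with
      | zero => simp [hp0]
      | succ j =>
        rw [hp, hg, hb_odd]
        have : v (2 * (j + 1)) + (v (2 * (j + 1)) + v (2 * (2 * (j + 1)))) =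
            (v (2 * (j + 1)) + v (2 * (j + 1))) + v (2 * (2 * (j + 1))) := by abel
        rw [this, v_add_self, zero_add]
    · subst hi
      simp only [LinearMap.add_apply, LinearMap.id_apply, LinearMap.comp_apply, ha_odd,
        hb_even, hf]
      have : v (2 * i + 1) + (v (2 * (2 * i + 1)) + v (2 * i + 1)) =
          (v (2 * i + 1) + v (2 * i + 1)) + v (2 * (2 * i + 1)) := by abel
      rw [this, v_add_self, zero_add]
  -- 1 + ab = g
  have key2 : (LinearMap.id : (ℕ →₀ ZMod 2) →ₗ[ZMod 2] (ℕ →₀ ZMod 2)) + a ∘ₗ b = g := by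
    apply ext_of_v
    intro n
    rcases Nat.even_or_odd n with ⟨i, hi⟩ | ⟨i, hi⟩
    · subst hi
      rw [(by ring : i + i = 2 * i)]
      simp only [LinearMap.add_apply, LinearMap.id_apply, LinearMap.comp_apply, hb_even,
        map_add, ha_odd, ha_even, hg]
      rw [hp, hg]
      have : v (2 * i) + (v (2 * (2 * i) + 1) + v (2 * i)) =
          (v (2 * i) + v (2 * i)) + v (2 * (2 * i) + 1) := by abel
      rw [this, v_add_self, zero_add]
    · subst hi
      simp only [LinearMap.add_apply, LinearMap.id_apply, LinearMap.comp_apply, hb_odd,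
        map_add, ha_even, hg]
      rw [(by ring : 2 * (i + 1) = (2 * i + 1) + 1), hp, hg]
      rw [hp, hg]
      have : v (2 * i + 1) + (v (2 * i + 1) + v (2 * (2 * i + 1) + 1)) =
          (v (2 * i + 1) + v (2 * i + 1)) + v (2 * (2 * i + 1) + 1) := by abel
      rw [this, v_add_self, zero_add]
  -- f and g are injective (they are map-domain maps with injective index maps)
  have hfdom : f = Finsupp.lmapDomain (ZMod 2) (ZMod 2) (fun n => 2 * n) := by
    apply ext_of_v; intro i
    rw [hf]; simp [v, Finsupp.lmapDomain_apply, Finsupp.mapDomain_single]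
  have hgdom : g = Finsupp.lmapDomain (ZMod 2) (ZMod 2) (fun n => 2 * n + 1) := by
    apply ext_of_v; intro i
    rw [hg]; simp [v, Finsupp.lmapDomain_apply, Finsupp.mapDomain_single]
  have hfinj : Function.Injective f := by
    rw [hfdom]
    exact Finsupp.mapDomain_injective (fun x y h => by omega)
  have hginj : Function.Injective g := by
    rw [hgdom]
    exact Finsupp.mapDomain_injective (fun x y h => by omega)
  rw [key1, key2]
  exact ⟨⟨hfinj, rfl⟩, hginj, rfl⟩
end
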